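/- arXiv:1106.4979 — 3 statements merged into one kernel-verified Lean document; each statement's English description precedes it below -/
import Mathlib

section
/- Let V be a real inner product space of dimension n ≥ 3 with unit vector X₁, and let K : V × V → V be a symmetric bilinear map that is invariant under every rotation fixing X₁, such that for each X the map Y ↦ K(X,Y) is traceless and h-symmetric (h(K(X,Y),Z) = h(K(X,Z),Y)). Then there exists r ∈ ℝ such that K(X₁,X₁) = (n−1)r X₁, K(X₁, X) = −r X for X ⊥ X₁, and K(X,Y) = −r h(X,Y) X₁ for X, Y ⊥ X₁. -/
/-!
Put `T x y z = ⟪K x y, z⟫`, a fully symmetric trilinear form invariant under the rotations fixing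
`X₁`. As `n ≥ 3`, each `b ⊥ X₁` has a nonzero partner `c ⊥ X₁, b`, and the product of the
reflections in `b` and `c` is such a rotation sending `b` to `-b`. By trilinearity this kills
`T X₁ X₁ b` and the cubic `T x x x` on `X₁ᗮ`, hence, by polarization, `T` on all of `X₁ᗮ`.
The same rotations act transitively on the spheres of `X₁ᗮ`, so `K X₁` is a multiple `a` of the
identity on `X₁ᗮ`; as `K X₁` is traceless, its eigenvalue on `X₁` is `-(n - 1) a`, and `r = -a`.
-/

open scoped RealInnerProductSpace
open Module Submodule

variable {E : Type*} [NormedAddCommGroup E] [InnerProductSpace ℝ E]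

theorem eq_of_inner_eq_of_forall_orthogonal {p v w : E} (hp : ⟪v, p⟫ = ⟪w, p⟫)
    (h : ∀ z ∈ (ℝ ∙ p)ᗮ, ⟪v, z⟫ = ⟪w, z⟫) : v = w := by
  have hvw : v - w ∈ (ℝ ∙ p)ᗮ := by
    rw [mem_orthogonal_singleton_iff_inner_left, inner_sub_left, hp, sub_self]
  have := h _ hvw
  rwa [← sub_eq_zero, ← inner_sub_left, inner_self_eq_zero, sub_eq_zero] at this

theorem exists_ne_zero_inner_eq_zero [FiniteDimensional ℝ E] (hE : 3 ≤ finrank ℝ E) (x y : E) :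
    ∃ w ≠ 0, ⟪x, w⟫ = 0 ∧ ⟪y, w⟫ = 0 := by
  have hker : LinearMap.ker ((innerₛₗ ℝ x).prod (innerₛₗ ℝ y)) ≠ ⊥ :=
    LinearMap.ker_ne_bot_of_finrank_lt (by rw [finrank_prod, finrank_self]; omega)
  obtain ⟨w, hw, hw0⟩ := exists_mem_ne_zero_of_ne_bot hker
  simp only [LinearMap.mem_ker, LinearMap.prod_apply, Function.prod, Prod.mk_eq_zero,
    innerₛₗ_apply_apply] at hw
  exact ⟨w, hw0, hw⟩

def IsRotationFixing (p : E) (g : E ≃ₗᵢ[ℝ] E) : Prop :=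
  LinearMap.det (g.toLinearEquiv : E →ₗ[ℝ] E) = 1 ∧ g p = p

theorem isRotationFixing_refl (p : E) : IsRotationFixing p (LinearIsometryEquiv.refl ℝ E) :=
  ⟨LinearMap.det_id, rfl⟩

def IsRotationInvariant (p : E) (K : E →ₗ[ℝ] E →ₗ[ℝ] E) : Prop :=
  ∀ g, IsRotationFixing p g → ∀ x y, K (g x) (g y) = g (K x y)

theorem det_reflection_orthogonal_singleton [FiniteDimensional ℝ E] {v : E} (hv : v ≠ 0) :
    LinearMap.det ((reflection (ℝ ∙ v)ᗮ).toLinearEquiv : E →ₗ[ℝ] E) = -1 := by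
  rw [det_reflection, orthogonal_orthogonal, finrank_span_singleton hv, pow_one]

theorem isRotationFixing_reflection_trans_reflection [FiniteDimensional ℝ E] {p v w : E}
    (hv : v ≠ 0) (hw : w ≠ 0) (hpv : ⟪p, v⟫ = 0) (hpw : ⟪p, w⟫ = 0) :
    IsRotationFixing p ((reflection (ℝ ∙ v)ᗮ).trans (reflection (ℝ ∙ w)ᗮ)) := by
  refine ⟨?_, ?_⟩
  · change LinearMap.det ((reflection (ℝ ∙ w)ᗮ).toLinearEquiv.toLinearMap ∘ₗ
      (reflection (ℝ ∙ v)ᗮ).toLinearEquiv.toLinearMap) = 1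
    rw [LinearMap.det_comp, det_reflection_orthogonal_singleton hv,
      det_reflection_orthogonal_singleton hw]
    norm_num
  · rw [LinearIsometryEquiv.trans_apply,
      reflection_mem_subspace_eq_self (mem_orthogonal_singleton_iff_inner_left.mpr hpv),
      reflection_mem_subspace_eq_self (mem_orthogonal_singleton_iff_inner_left.mpr hpw)]

theorem exists_isRotationFixing_apply_eq_neg [FiniteDimensional ℝ E] (hE : 3 ≤ finrank ℝ E)
    {p b : E} (hb : b ∈ (ℝ ∙ p)ᗮ) : ∃ g, IsRotationFixing p g ∧ g b = -b := by
  by_cases hb0 : b = 0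
  · exact ⟨_, isRotationFixing_refl p, by simp [hb0]⟩
  obtain ⟨c, hc0, hpc, hbc⟩ := exists_ne_zero_inner_eq_zero hE p b
  refine ⟨_, isRotationFixing_reflection_trans_reflection hb0 hc0
    (mem_orthogonal_singleton_iff_inner_right.mp hb) hpc, ?_⟩
  rw [LinearIsometryEquiv.trans_apply, reflection_orthogonalComplement_singleton_eq_neg, map_neg,
    reflection_mem_subspace_eq_self (mem_orthogonal_singleton_iff_inner_left.mpr hbc)]

theorem exists_isRotationFixing_apply_eq [FiniteDimensional ℝ E] (hE : 3 ≤ finrank ℝ E)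
    {p u v : E} (hu : u ∈ (ℝ ∙ p)ᗮ) (hv : v ∈ (ℝ ∙ p)ᗮ) (huv : ‖u‖ = ‖v‖) :
    ∃ g, IsRotationFixing p g ∧ g u = v := by
  by_cases hu_eq : u = v
  · exact ⟨_, isRotationFixing_refl p, hu_eq⟩
  obtain ⟨w, hw0, hpw, hvw⟩ := exists_ne_zero_inner_eq_zero hE p v
  have hpuv : ⟪p, u - v⟫ = 0 := by
    rw [inner_sub_right, mem_orthogonal_singleton_iff_inner_right.mp hu,
      mem_orthogonal_singleton_iff_inner_right.mp hv, sub_zero]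
  refine ⟨_, isRotationFixing_reflection_trans_reflection (sub_ne_zero.mpr hu_eq) hw0 hpuv hpw, ?_⟩
  rw [LinearIsometryEquiv.trans_apply, reflection_sub huv,
    reflection_mem_subspace_eq_self (mem_orthogonal_singleton_iff_inner_left.mpr hvw)]

section Polarization

variable {K : E →ₗ[ℝ] E →ₗ[ℝ] E} {S : Submodule ℝ E}

theorem inner_apply_eq_zero_of_inner_apply_self_self_eq_zero (hKsym : ∀ x y, K x y = K y x)
    (hKhsym : ∀ x y z, ⟪K x y, z⟫ = ⟪K x z, y⟫) (hS : ∀ x ∈ S, ⟪K x x, x⟫ = 0)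
    {x y z : E} (hx : x ∈ S) (hy : y ∈ S) (hz : z ∈ S) : ⟪K x y, z⟫ = 0 := by
  have hxyy : ∀ x ∈ S, ∀ y ∈ S, ⟪K x y, y⟫ = 0 := by
    intro x hx y hy
    have hadd := hS _ (S.add_mem hx hy)
    have hsub := hS _ (S.sub_mem hx hy)
    simp only [map_add, map_sub, LinearMap.add_apply, LinearMap.sub_apply, inner_add_left,
      inner_add_right, inner_sub_left, inner_sub_right, hKhsym x y x, hKhsym y y x, hKsym y x,
      hS x hx, hS y hy] at hadd hsub
    linarith
  have h := hxyy x hx _ (S.add_mem hy hz)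
  simp only [map_add, inner_add_left, inner_add_right, hxyy x hx y hy, hxyy x hx z hz,
    hKhsym x z y] at h
  linarith

theorem inner_apply_eq_mul_inner_of_inner_apply_self {P : E →ₗ[ℝ] E}
    (hP : ∀ x y, ⟪P x, y⟫ = ⟪P y, x⟫) {a : ℝ} (hS : ∀ x ∈ S, ⟪P x, x⟫ = a * ⟪x, x⟫)
    {x y : E} (hx : x ∈ S) (hy : y ∈ S) : ⟪P x, y⟫ = a * ⟪x, y⟫ := by
  have h := hS _ (S.add_mem hx hy)
  simp only [map_add, inner_add_left, inner_add_right, hS x hx, hS y hy, hP y x,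
    real_inner_comm x y] at h
  linarith

end Polarization

section Invariance

variable {K : E →ₗ[ℝ] E →ₗ[ℝ] E} {p : E}

theorem inner_apply_map_map_map (hinv : IsRotationInvariant p K) {g : E ≃ₗᵢ[ℝ] E}
    (hg : IsRotationFixing p g) (x y z : E) :
    ⟪K (g x) (g y), g z⟫ = ⟪K x y, z⟫ := by
  rw [hinv g hg, LinearIsometryEquiv.inner_map_map]

variable [FiniteDimensional ℝ E]

theorem inner_apply_self_eq_zero_of_mem_orthogonal (hE : 3 ≤ finrank ℝ E)
    (hinv : IsRotationInvariant p K) {w : E} (hw : w ∈ (ℝ ∙ p)ᗮ) : ⟪K p p, w⟫ = 0 := by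
  obtain ⟨g, hg, hgw⟩ := exists_isRotationFixing_apply_eq_neg hE hw
  have h := inner_apply_map_map_map hinv hg p p w
  rw [hg.2, hgw, inner_neg_right] at h
  linarith

theorem inner_apply_self_self_eq_zero (hE : 3 ≤ finrank ℝ E)
    (hinv : IsRotationInvariant p K) {x : E} (hx : x ∈ (ℝ ∙ p)ᗮ) : ⟪K x x, x⟫ = 0 := by
  obtain ⟨g, hg, hgx⟩ := exists_isRotationFixing_apply_eq_neg hE hx
  have h := inner_apply_map_map_map hinv hg x x x
  simp only [hgx, map_neg, LinearMap.neg_apply, inner_neg_right, neg_neg] at h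
  linarith

theorem exists_inner_apply_self_eq_mul_inner (hE : 3 ≤ finrank ℝ E)
    (hinv : IsRotationInvariant p K) :
    ∃ a : ℝ, ∀ x ∈ (ℝ ∙ p)ᗮ, ⟪K p x, x⟫ = a * ⟪x, x⟫ := by
  obtain ⟨u₀, hu₀, hpu₀, -⟩ := exists_ne_zero_inner_eq_zero hE p p
  obtain ⟨u, hu, hu1⟩ : ∃ u ∈ (ℝ ∙ p)ᗮ, ‖u‖ = 1 :=
    ⟨_, smul_mem _ _ (mem_orthogonal_singleton_iff_inner_right.mpr hpu₀), norm_smul_inv_norm hu₀⟩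
  refine ⟨⟪K p u, u⟫, fun x hx => ?_⟩
  obtain ⟨g, hg, hgx⟩ := exists_isRotationFixing_apply_eq hE hx (smul_mem _ ‖x‖ hu)
    (by rw [norm_smul, hu1, norm_norm, mul_one])
  rw [← inner_apply_map_map_map hinv hg, hg.2, hgx, map_smul, real_inner_smul_left,
    real_inner_smul_right, real_inner_self_eq_norm_sq x]
  ring

theorem apply_self_eq_inner_smul (hp : ⟪p, p⟫ = 1) (hE : 3 ≤ finrank ℝ E)
    (hinv : IsRotationInvariant p K) : K p p = ⟪K p p, p⟫ • p := by
  refine eq_of_inner_eq_of_forall_orthogonal (p := p) (by rw [real_inner_smul_left, hp, mul_one])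
    fun z hz => ?_
  rw [inner_apply_self_eq_zero_of_mem_orthogonal hE hinv hz, real_inner_smul_left,
    mem_orthogonal_singleton_iff_inner_right.mp hz, mul_zero]

theorem apply_eq_smul_of_mem_orthogonal (hKhsym : ∀ x y z, ⟪K x y, z⟫ = ⟪K x z, y⟫)
    (hE : 3 ≤ finrank ℝ E) (hinv : IsRotationInvariant p K) {a : ℝ}
    (ha : ∀ x ∈ (ℝ ∙ p)ᗮ, ⟪K p x, x⟫ = a * ⟪x, x⟫) {x : E} (hx : x ∈ (ℝ ∙ p)ᗮ) :
    K p x = a • x := by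
  refine eq_of_inner_eq_of_forall_orthogonal (p := p) ?_ fun z hz => ?_
  · rw [hKhsym, inner_apply_self_eq_zero_of_mem_orthogonal hE hinv hx, real_inner_smul_left,
      mem_orthogonal_singleton_iff_inner_left.mp hx, mul_zero]
  · rw [inner_apply_eq_mul_inner_of_inner_apply_self (hKhsym p) ha hx hz, real_inner_smul_left]

theorem apply_apply_eq_smul_of_mem_orthogonal (hKsym : ∀ x y, K x y = K y x)
    (hKhsym : ∀ x y z, ⟪K x y, z⟫ = ⟪K x z, y⟫) (hp : ⟪p, p⟫ = 1) (hE : 3 ≤ finrank ℝ E)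
    (hinv : IsRotationInvariant p K) {a : ℝ} (ha : ∀ x ∈ (ℝ ∙ p)ᗮ, ⟪K p x, x⟫ = a * ⟪x, x⟫)
    {x y : E} (hx : x ∈ (ℝ ∙ p)ᗮ) (hy : y ∈ (ℝ ∙ p)ᗮ) : K x y = (a * ⟪x, y⟫) • p := by
  refine eq_of_inner_eq_of_forall_orthogonal (p := p) ?_ fun z hz => ?_
  · rw [hKhsym, hKsym, apply_eq_smul_of_mem_orthogonal hKhsym hE hinv ha hx,
      real_inner_smul_left, real_inner_smul_left, hp, mul_one]
  · rw [inner_apply_eq_zero_of_inner_apply_self_self_eq_zero hKsym hKhsym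
      (fun x hx => inner_apply_self_self_eq_zero hE hinv hx) hx hy hz,
      real_inner_smul_left, mem_orthogonal_singleton_iff_inner_right.mp hz, mul_zero]

end Invariance

theorem trace_eq_of_apply_eq_smul [FiniteDimensional ℝ E] {p : E} (hp : ‖p‖ = 1) {P : E →ₗ[ℝ] E}
    {a c : ℝ} (hPp : P p = c • p) (hP : ∀ x ∈ (ℝ ∙ p)ᗮ, P x = a • x) :
    LinearMap.trace ℝ E P = c + (finrank ℝ E - 1) * a := by
  have hpp : ⟪p, p⟫ = 1 := by rw [real_inner_self_eq_norm_sq, hp, one_pow]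
  have hP_eq : P = a • LinearMap.id + (c - a) • (innerₛₗ ℝ p).smulRight p := by
    ext v
    have hv : v - ⟪p, v⟫ • p ∈ (ℝ ∙ p)ᗮ := by
      rw [mem_orthogonal_singleton_iff_inner_right, inner_sub_right, real_inner_smul_right, hpp,
        mul_one, sub_self]
    have hsplit := congrArg P (sub_add_cancel v (⟪p, v⟫ • p))
    rw [map_add, hP _ hv, map_smul, hPp] at hsplit
    rw [← hsplit]
    simp only [LinearMap.add_apply, LinearMap.smul_apply, LinearMap.id_apply,
      LinearMap.smulRight_apply, innerₛₗ_apply_apply]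
    module
  rw [hP_eq, map_add, map_smul, map_smul, LinearMap.trace_id, LinearMap.trace_smulRight,
    innerₛₗ_apply_apply, hpp, smul_eq_mul, smul_eq_mul]
  ring

/-- A traceless, h-symmetric, symmetric bilinear map `K` on `ℝⁿ`
(n ≥ 3) invariant under all rotations fixing the unit vector `X₁` has the
canonical `SO(n−1)`-symmetric form determined by a single number `r`. -/
theorem stmt2 (n : ℕ) (hn : 3 ≤ n)
    (X₁ : EuclideanSpace ℝ (Fin n)) (hX₁ : ‖X₁‖ = 1)
    (K : EuclideanSpace ℝ (Fin n) →ₗ[ℝ] EuclideanSpace ℝ (Fin n) →ₗ[ℝ]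
      EuclideanSpace ℝ (Fin n))
    (hKsym : ∀ X Y, K X Y = K Y X)
    (hKtraceless : ∀ X, LinearMap.trace ℝ (EuclideanSpace ℝ (Fin n)) (K X) = 0)
    (hKhsym : ∀ X Y Z, ⟪K X Y, Z⟫ = ⟪K X Z, Y⟫)
    (hequiv : ∀ g : EuclideanSpace ℝ (Fin n) ≃ₗᵢ[ℝ] EuclideanSpace ℝ (Fin n),
      LinearMap.det (g.toLinearEquiv : EuclideanSpace ℝ (Fin n) →ₗ[ℝ]
        EuclideanSpace ℝ (Fin n)) = 1 → g X₁ = X₁ →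
      ∀ X Y, K (g X) (g Y) = g (K X Y)) :
    ∃ r : ℝ, K X₁ X₁ = (((n : ℝ) - 1) * r) • X₁ ∧
      (∀ X, ⟪X, X₁⟫ = 0 → K X₁ X = (-r) • X) ∧
      (∀ X Y, ⟪X, X₁⟫ = 0 → ⟪Y, X₁⟫ = 0 → K X Y = (-r * ⟪X, Y⟫) • X₁) := by
  have hE : 3 ≤ finrank ℝ (EuclideanSpace ℝ (Fin n)) := by rwa [finrank_euclideanSpace_fin]
  have hinv : IsRotationInvariant X₁ K := fun g hg => hequiv g hg.1 hg.2
  have hX₁X₁ : ⟪X₁, X₁⟫ = 1 := by rw [real_inner_self_eq_norm_sq, hX₁, one_pow]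
  obtain ⟨a, ha⟩ := exists_inner_apply_self_eq_mul_inner hE hinv
  have hKX₁X₁ := apply_self_eq_inner_smul hX₁X₁ hE hinv
  have htrace := trace_eq_of_apply_eq_smul hX₁ hKX₁X₁
    fun X hX => apply_eq_smul_of_mem_orthogonal hKhsym hE hinv ha hX
  rw [hKtraceless, finrank_euclideanSpace_fin] at htrace
  refine ⟨-a, ?_, fun X hX => ?_, fun X Y hX hY => ?_⟩
  · rw [hKX₁X₁]
    congr 1
    linarith
  · rw [apply_eq_smul_of_mem_orthogonal hKhsym hE hinv ha
      (mem_orthogonal_singleton_iff_inner_left.mpr hX), neg_neg]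
  · rw [apply_apply_eq_smul_of_mem_orthogonal hKsym hKhsym hX₁X₁ hE hinv ha
      (mem_orthogonal_singleton_iff_inner_left.mpr hX)
      (mem_orthogonal_singleton_iff_inner_left.mpr hY), neg_neg]
end

section
/- Suppose smooth real functions a, b, r, σ of one variable t satisfy b' = (a−b)(σ−r), r' = −((a−b)/2 + (n+1)σr), and σ' = −((a+b)/2 + n r² + σ²), where n ≥ 3. Then the quantity ζ = b − r² + σ² satisfies ζ' = −2σζ. Consequently, if f is any function with f' = σ, then e^{2f} ζ is constant. -/
/-!
Differentiating `ζ = b − r² + σ²` along the system, every term containing `a` or `n` cancels and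
what remains is `−2σ(b − r² + σ²)`. The constancy of `e^{2f} ζ` is then the integrating-factor
argument: its derivative is `e^{2f}(2σζ + ζ') = 0`.
-/

open Real

theorem exp_mul_eq_of_hasDerivAt_eq_neg_mul {g F ζ : ℝ → ℝ}
    (hζ : ∀ t, HasDerivAt ζ (-g t * ζ t) t) (hF : ∀ t, HasDerivAt F (g t) t) (s t : ℝ) :
    exp (F s) * ζ s = exp (F t) * ζ t := by
  have hderiv : ∀ u, HasDerivAt (fun x => exp (F x) * ζ x) 0 u := fun u =>
    ((hF u).exp.mul (hζ u)).congr_deriv (by ring)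
  exact is_const_of_deriv_eq_zero (fun u => (hderiv u).differentiableAt)
    (fun u => (hderiv u).deriv) s t

theorem hasDerivAt_sub_sq_add_sq {n : ℝ} {a b r σ : ℝ → ℝ} {t : ℝ}
    (hb : HasDerivAt b ((a t - b t) * (σ t - r t)) t)
    (hr : HasDerivAt r (-((a t - b t) / 2 + (n + 1) * σ t * r t)) t)
    (hσ : HasDerivAt σ (-((a t + b t) / 2 + n * r t ^ 2 + σ t ^ 2)) t) :
    HasDerivAt (fun t => b t - r t ^ 2 + σ t ^ 2) (-2 * σ t * (b t - r t ^ 2 + σ t ^ 2)) t := by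
  refine ((hb.sub (hr.pow 2)).add (hσ.pow 2)).congr_deriv ?_
  simp only [Nat.cast_ofNat, Nat.add_one_sub_one, pow_one]
  ring

theorem stmt5_general (n : ℕ) (a b r σ : ℝ → ℝ)
    (hb : ∀ t, HasDerivAt b ((a t - b t) * (σ t - r t)) t)
    (hr : ∀ t, HasDerivAt r (-((a t - b t) / 2 + ((n : ℝ) + 1) * σ t * r t)) t)
    (hσ : ∀ t, HasDerivAt σ (-((a t + b t) / 2 + (n : ℝ) * r t ^ 2 + σ t ^ 2)) t)
    (ζ : ℝ → ℝ) (hζ : ∀ t, ζ t = b t - r t ^ 2 + σ t ^ 2) :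
    (∀ t, HasDerivAt ζ (-2 * σ t * ζ t) t) ∧
    (∀ f : ℝ → ℝ, (∀ t, HasDerivAt f (σ t) t) →
      ∀ s t : ℝ, Real.exp (2 * f s) * ζ s = Real.exp (2 * f t) * ζ t) := by
  obtain rfl : ζ = fun t => b t - r t ^ 2 + σ t ^ 2 := funext hζ
  have hderiv t : HasDerivAt _ (-2 * σ t * _) t := hasDerivAt_sub_sq_add_sq (hb t) (hr t) (hσ t)
  refine ⟨hderiv, fun f hf => exp_mul_eq_of_hasDerivAt_eq_neg_mul (g := fun t => 2 * σ t)
    (fun t => (hderiv t).congr_deriv (by ring)) fun t => (hf t).const_mul 2⟩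

/-- Under the structure ODEs, `ζ = b − r² + σ²` satisfies
`ζ' = −2σζ`, hence `e^{2f} ζ` is constant whenever `f' = σ`. -/
theorem stmt5 (n : ℕ) (hn : 3 ≤ n) (a b r σ : ℝ → ℝ)
    (hb : ∀ t, HasDerivAt b ((a t - b t) * (σ t - r t)) t)
    (hr : ∀ t, HasDerivAt r (-((a t - b t) / 2 + ((n : ℝ) + 1) * σ t * r t)) t)
    (hσ : ∀ t, HasDerivAt σ (-((a t + b t) / 2 + (n : ℝ) * r t ^ 2 + σ t ^ 2)) t)
    (ζ : ℝ → ℝ) (hζ : ∀ t, ζ t = b t - r t ^ 2 + σ t ^ 2) :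
    (∀ t, HasDerivAt ζ (-2 * σ t * ζ t) t) ∧
    (∀ f : ℝ → ℝ, (∀ t, HasDerivAt f (σ t) t) →
      ∀ s t : ℝ, Real.exp (2 * f s) * ζ s = Real.exp (2 * f t) * ζ t) :=
  stmt5_general n a b r σ hb hr hσ ζ hζ
end

section
/- Let γ = (γ₁, γ₂) : I → ℝ² be a smooth curve with γ₁(t) = e^{at}, γ₂(t) = e^{bt} for nonzero constants a, b with a ≠ b. Then the expression (γ₁')^{n+2} γ₁^{n−1} / [ (γ₂')^{n−1} (γ₁'' γ₂' − γ₂'' γ₁') ] is constant in t if and only if b = 2a. -/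
/-!
For `γ = (e^{at}, e^{bt})` every factor of the ratio is a monomial in `x = e^{at}` and
`y = e^{bt}`, and the ratio collapses to `a^{n+1} / (b^n (a - b)) · (x² / y)^n
= a^{n+1} / (b^n (a - b)) · e^{n(2a - b)t}`. Its coefficient is nonzero, so the ratio is
constant exactly when the exponent `n(2a - b)` vanishes.
-/

open Real

noncomputable def improperAffineSphereRatio (n : ℕ) (γ₁ γ₂ : ℝ → ℝ) (t : ℝ) : ℝ :=
  (deriv γ₁ t) ^ (n + 2) * (γ₁ t) ^ (n - 1) /
    ((deriv γ₂ t) ^ (n - 1) *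
      (deriv (deriv γ₁) t * deriv γ₂ t - deriv (deriv γ₂) t * deriv γ₁ t))

lemma deriv_exp_const_mul (c : ℝ) :
    deriv (fun t => exp (c * t)) = fun t => c * exp (c * t) := by
  funext t
  simpa [mul_comm] using ((hasDerivAt_id t).const_mul c).exp.deriv

lemma improperAffineSphereRatio_exp {n : ℕ} (hn : n ≠ 0) {a b : ℝ} (ha : a ≠ 0) (hb : b ≠ 0)
    (hab : a ≠ b) (t : ℝ) :
    improperAffineSphereRatio n (fun t => exp (a * t)) (fun t => exp (b * t)) t =
      a ^ (n + 1) / (b ^ n * (a - b)) * exp (n * (2 * a - b) * t) := by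
  obtain ⟨m, rfl⟩ : ∃ m, n = m + 1 := ⟨n - 1, by omega⟩
  have hexp : exp ((m + 1 : ℕ) * (2 * a - b) * t) = (exp (a * t) ^ 2 / exp (b * t)) ^ (m + 1) := by
    rw [mul_assoc, exp_nat_mul, sq, ← exp_add, ← exp_sub]
    ring_nf
  simp only [improperAffineSphereRatio, deriv_exp_const_mul, deriv_const_mul_field',
    Nat.add_sub_cancel, hexp]
  have hab' := sub_ne_zero.mpr hab
  have hx := exp_ne_zero (a * t)
  have hy := exp_ne_zero (b * t)
  generalize exp (a * t) = x at hx ⊢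
  generalize exp (b * t) = y at hy ⊢
  rw [div_pow]
  field_simp
  ring

lemma forall_const_mul_exp_eq_iff {K : ℝ} (hK : K ≠ 0) (c : ℝ) :
    (∀ s t : ℝ, K * exp (c * s) = K * exp (c * t)) ↔ c = 0 := by
  refine ⟨fun h => ?_, fun hc s t => by simp [hc]⟩
  simpa [hK] using h 1 0

/-- For γ = (e^{at}, e^{bt}), the improper affine sphere ratio
(γ₁')^{n+2} γ₁^{n−1} / [(γ₂')^{n−1}(γ₁''γ₂' − γ₂''γ₁')] is constant iff b = 2a. -/
theorem stmt7 (n : ℕ) (hn : 2 ≤ n) (a b : ℝ) (ha : a ≠ 0) (hb : b ≠ 0) (hab : a ≠ b)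
    (γ₁ γ₂ : ℝ → ℝ) (hγ₁ : γ₁ = fun t => Real.exp (a * t))
    (hγ₂ : γ₂ = fun t => Real.exp (b * t)) :
    (∀ s t : ℝ,
      (deriv γ₁ s) ^ (n + 2) * (γ₁ s) ^ (n - 1) /
        ((deriv γ₂ s) ^ (n - 1) *
          (deriv (deriv γ₁) s * deriv γ₂ s - deriv (deriv γ₂) s * deriv γ₁ s))
      = (deriv γ₁ t) ^ (n + 2) * (γ₁ t) ^ (n - 1) /
        ((deriv γ₂ t) ^ (n - 1) *
          (deriv (deriv γ₁) t * deriv γ₂ t - deriv (deriv γ₂) t * deriv γ₁ t)))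
    ↔ b = 2 * a := by
  subst hγ₁ hγ₂
  have hn₀ : n ≠ 0 := by omega
  change (∀ s t, improperAffineSphereRatio n _ _ s = improperAffineSphereRatio n _ _ t) ↔ _
  have hK : a ^ (n + 1) / (b ^ n * (a - b)) ≠ 0 := by
    have := sub_ne_zero.mpr hab
    positivity
  simp only [improperAffineSphereRatio_exp hn₀ ha hb hab, forall_const_mul_exp_eq_iff hK,
    mul_eq_zero, Nat.cast_eq_zero, hn₀, false_or]
  exact sub_eq_zero.trans eq_comm
end
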